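/- Let E be a countable set, p a transition kernel on E, α ∈ (0,1), and p̃(x,y) = (1−α)δ(x,y) + α·p(x,y) where δ(x,y) = 1 if x = y and 0 otherwise. Let G and G̃ be the Green functions of p and p̃ respectively. Then for all x, y ∈ E one has α·G̃(x,y) = G(x,y), as an equality in [0,∞]; in particular the Martin kernels of p and p̃ coincide. -/

import Mathlib

open scoped ENNReal

noncomputable section

/-- Convolution powers of a transition kernel on a countable set `E`:
`p⁽⁰⁾(x,y) = δ(x,y)` and `p⁽ⁿ⁺¹⁾(x,y) = ∑_z p(x,z) p⁽ⁿ⁾(z,y)`. -/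
def kernelPow {E : Type*} [DecidableEq E] (p : E → E → ℝ≥0∞) : ℕ → E → E → ℝ≥0∞
  | 0 => fun x y => if x = y then 1 else 0
  | n + 1 => fun x y => ∑' z : E, p x z * kernelPow p n z y

/-- The Green function `G(x,y) = ∑_{n≥0} p⁽ⁿ⁾(x,y) ∈ [0,∞]`. -/
def greenFn {E : Type*} [DecidableEq E] (p : E → E → ℝ≥0∞) (x y : E) : ℝ≥0∞ :=
  ∑' n : ℕ, kernelPow p n x y

lemma tsum_ite_left {E : Type*} [DecidableEq E] (x : E) (f : E → ℝ≥0∞) :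
    ∑' z : E, (if x = z then f z else 0) = f x := by
  rw [tsum_eq_single x (fun z hz => if_neg (fun h => hz h.symm))]
  simp

lemma greenFn_rec {E : Type*} [DecidableEq E] (q : E → E → ℝ≥0∞) (x y : E) :
    greenFn q x y = (if x = y then 1 else 0) + ∑' z : E, q x z * greenFn q z y := by
  rw [greenFn, tsum_eq_zero_add' ENNReal.summable]
  congr 1
  simp only [kernelPow, greenFn]
  rw [ENNReal.tsum_comm]
  exact tsum_congr fun z => (ENNReal.tsum_mul_left (a := q x z) (f := fun n => kernelPow q n z y))

lemma greenFn_min {E : Type*} [DecidableEq E] (q : E → E → ℝ≥0∞) (y : E) (F : E → ℝ≥0∞)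
    (hF : ∀ x, (if x = y then 1 else 0) + ∑' z : E, q x z * F z ≤ F x) :
    ∀ x, greenFn q x y ≤ F x := by
  have key : ∀ N x, ∑ n ∈ Finset.range N, kernelPow q n x y ≤ F x := by
    intro N
    induction N with
    | zero => simp
    | succ N ih =>
      intro x
      have step : ∑ n ∈ Finset.range (N + 1), kernelPow q n x y
          = (if x = y then 1 else 0)
            + ∑' z : E, q x z * ∑ n ∈ Finset.range N, kernelPow q n z y := by
        rw [Finset.sum_range_succ', add_comm]
        congr 1
        calc ∑ i ∈ Finset.range N, kernelPow q (i + 1) x y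
            = ∑' z : E, ∑ i ∈ Finset.range N, q x z * kernelPow q i z y := by
              simp only [kernelPow]
              exact (Summable.tsum_finsetSum (fun i _ => ENNReal.summable)).symm
          _ = ∑' z : E, q x z * ∑ i ∈ Finset.range N, kernelPow q i z y :=
              tsum_congr fun z => (Finset.mul_sum _ _ _).symm
      rw [step]
      refine le_trans ?_ (hF x)
      exact add_le_add_right
        (ENNReal.tsum_le_tsum fun z => mul_le_mul_right (ih z) _) _
  intro x
  exact Summable.tsum_le_of_sum_range_le ENNReal.summable (fun N => key N x)

/-- for a transition kernel `p` on a countable set `E` and `α ∈ (0,1)`, the lazy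
kernel `p̃(x,y) = (1-α)δ(x,y) + α p(x,y)` satisfies `α·G̃(x,y) = G(x,y)` in `[0,∞]`; in
particular the Martin kernels of `p` and `p̃` coincide. -/
theorem stmt2 {E : Type*} [Countable E] [DecidableEq E] (p : E → E → ℝ≥0∞)
    (hfin : ∀ x : E, (∑' y : E, p x y) ≠ ⊤)
    (α : ℝ) (hα : α ∈ Set.Ioo (0 : ℝ) 1)
    (pt : E → E → ℝ≥0∞)
    (hpt : ∀ x y : E, pt x y =
      ENNReal.ofReal (1 - α) * (if x = y then 1 else 0) + ENNReal.ofReal α * p x y) :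
    (∀ x y : E, ENNReal.ofReal α * greenFn pt x y = greenFn p x y) ∧
    (∀ x y x₀ : E, greenFn pt x y / greenFn pt x₀ y = greenFn p x y / greenFn p x₀ y) := by
  obtain ⟨hα0, hα1⟩ := hα
  set a : ℝ≥0∞ := ENNReal.ofReal α with ha
  set b : ℝ≥0∞ := ENNReal.ofReal (1 - α) with hb
  have ha0 : a ≠ 0 := by
    simp [ha, ENNReal.ofReal_eq_zero, not_le, hα0]
  have hat : a ≠ ⊤ := ENNReal.ofReal_ne_top
  have hbt : b ≠ ⊤ := ENNReal.ofReal_ne_top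
  have hab : a + b = 1 := by
    rw [ha, hb, ← ENNReal.ofReal_add hα0.le (by linarith)]
    norm_num
  have haa : a * a⁻¹ = 1 := ENNReal.mul_inv_cancel ha0 hat
  have hba : b * a⁻¹ + 1 = a⁻¹ := by
    rw [← haa, ← add_mul, add_comm b a, hab, one_mul]
  -- expand the pt-tsum
  have hexpand : ∀ (F : E → ℝ≥0∞) (x : E),
      (∑' z : E, pt x z * F z) = b * F x + a * ∑' z : E, p x z * F z := by
    intro F x
    have : ∀ z : E, pt x z * F z
        = (if x = z then b * F z else 0) + a * (p x z * F z) := by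
      intro z
      rw [hpt]
      by_cases h : x = z <;> simp [h, add_mul, mul_assoc]
    rw [tsum_congr this, ENNReal.tsum_add, tsum_ite_left, ENNReal.tsum_mul_left]
  have main : ∀ x y : E, a * greenFn pt x y = greenFn p x y := by
    intro x y
    apply le_antisymm
    · -- a * G̃ ≤ G, via minimality of G̃ against a⁻¹ * G
      have h1 : ∀ x, greenFn pt x y ≤ a⁻¹ * greenFn p x y := by
        apply greenFn_min
        intro x
        rw [hexpand]
        have hSa : (∑' z : E, p x z * (a⁻¹ * greenFn p z y))
            = a⁻¹ * ∑' z : E, p x z * greenFn p z y := by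
          rw [← ENNReal.tsum_mul_left]
          exact tsum_congr fun z => by ring
        rw [hSa]
        apply le_of_eq
        have : (if x = y then 1 else 0)
              + (b * (a⁻¹ * greenFn p x y)
                + a * (a⁻¹ * ∑' z : E, p x z * greenFn p z y))
            = b * a⁻¹ * greenFn p x y
              + ((if x = y then 1 else 0) + ∑' z : E, p x z * greenFn p z y) := by
          rw [← mul_assoc a a⁻¹, haa, one_mul]
          ring
        rw [this, ← greenFn_rec]
        calc b * a⁻¹ * greenFn p x y + greenFn p x y
            = (b * a⁻¹ + 1) * greenFn p x y := by ring
          _ = a⁻¹ * greenFn p x y := by rw [hba]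
      calc a * greenFn pt x y ≤ a * (a⁻¹ * greenFn p x y) :=
            mul_le_mul_right (h1 x) _
        _ = greenFn p x y := by rw [← mul_assoc, haa, one_mul]
    · -- G ≤ a * G̃, via minimality of G against a * G̃
      refine greenFn_min p y (fun x => a * greenFn pt x y) ?_ x
      intro x
      show (if x = y then 1 else 0) + ∑' z : E, p x z * (a * greenFn pt z y)
          ≤ a * greenFn pt x y
      by_cases hfty : greenFn pt x y = ⊤
      · rw [hfty, ENNReal.mul_top ha0]
        exact le_top
      · have hrec := greenFn_rec pt x y
        rw [hexpand] at hrec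
        set S := ∑' z : E, p x z * greenFn pt z y with hS
        have hsplit : a * greenFn pt x y + b * greenFn pt x y = greenFn pt x y := by
          rw [← add_mul, hab, one_mul]
        have hbf : b * greenFn pt x y ≠ ⊤ := ENNReal.mul_ne_top hbt hfty
        have hcancel : a * greenFn pt x y = (if x = y then 1 else 0) + a * S := by
          have h2 : b * greenFn pt x y + a * greenFn pt x y
              = b * greenFn pt x y + ((if x = y then 1 else 0) + a * S) := by
            conv_lhs => rw [add_comm, hsplit, hrec]
            ring
          exact (ENNReal.add_right_inj hbf).mp h2
        have hSa : (∑' z : E, p x z * (a * greenFn pt z y)) = a * S := by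
          rw [hS, ← ENNReal.tsum_mul_left]
          exact tsum_congr fun z => by ring
        rw [hSa]
        exact hcancel.ge
  refine ⟨main, fun x y x₀ => ?_⟩
  rw [← main x y, ← main x₀ y, ENNReal.mul_div_mul_left _ _ ha0 hat]
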